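/- Let ν > 0, let λ < 2ν be real, and set μ = √(1 − λ/(2ν)). Define v^±(x) = e^{±μ√ν x}·(∓μ + tanh(√ν x)). Then: (i) each of v⁺ and v⁻ satisfies the ODE v''(x) + 2ν sech²(√ν x)·v(x) = (ν − λ/2)·v(x) for all x ∈ ℝ; and (ii) the Wronskian evaluated at x = 0 equals v⁺(0)·(v⁻)'(0) − (v⁺)'(0)·v⁻(0) = 2μ√ν(μ² − 1) = −(λ/√ν)·√(1 − λ/(2ν)). Consequently λ = 0 is the only zero in (−∞, 2ν) of this expression, i.e., the Evans function of the reduced long-wave–short-wave spectral problem vanishes only at λ = 0 below the essential spectrum. -/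

import Mathlib

/-- The explicit solutions `v^± (ε = ±1)` of the reduced LW-SW spectral problem:
`v^ε(x) = e^{ε μ √ν x}(−ε μ + tanh(√ν x))` with `μ = √(1 − λ/(2ν))`. -/
noncomputable def vLW (ν lam ε x : ℝ) : ℝ :=
  Real.exp (ε * Real.sqrt (1 - lam / (2 * ν)) * Real.sqrt ν * x) *
    (-ε * Real.sqrt (1 - lam / (2 * ν)) + Real.tanh (Real.sqrt ν * x))


/-- Derivative of `tanh`. -/
lemma tanh_hasDerivAt' (x : ℝ) :
    HasDerivAt Real.tanh (1 - Real.tanh x ^ 2) x := by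
  have hc : Real.cosh x ≠ 0 := ne_of_gt (Real.cosh_pos x)
  have h := (Real.hasDerivAt_sinh x).div (Real.hasDerivAt_cosh x) hc
  have hfun : (fun y => Real.sinh y / Real.cosh y) = Real.tanh := by
    funext y; rw [Real.tanh_eq_sinh_div_cosh]
  rw [show (Real.sinh / Real.cosh) = (fun y => Real.sinh y / Real.cosh y) from rfl, hfun] at h
  refine h.congr_deriv ?_
  rw [Real.tanh_eq_sinh_div_cosh]
  have h1 := Real.cosh_sq_sub_sinh_sq x
  field_simp

/-- Derivative of the building-block function `e^{Ax}(c₀ + c₁ tanh(Bx) + c₂ tanh(Bx)²)`. -/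
lemma vderiv (A B c0 c1 c2 x : ℝ) :
    HasDerivAt (fun y => Real.exp (A * y) *
        (c0 + c1 * Real.tanh (B * y) + c2 * Real.tanh (B * y) ^ 2))
      (Real.exp (A * x) *
        (A * (c0 + c1 * Real.tanh (B * x) + c2 * Real.tanh (B * x) ^ 2)
          + (c1 + 2 * c2 * Real.tanh (B * x)) * (B * (1 - Real.tanh (B * x) ^ 2)))) x := by
  have hT : HasDerivAt (fun y => Real.tanh (B * y)) (B * (1 - Real.tanh (B * x) ^ 2)) x := by
    have h := (tanh_hasDerivAt' (B * x)).comp x ((hasDerivAt_id x).const_mul B)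
    simpa [mul_comm, Function.comp_def] using h
  have hE : HasDerivAt (fun y => Real.exp (A * y)) (A * Real.exp (A * x)) x := by
    have h := ((hasDerivAt_id x).const_mul A).exp
    simpa [mul_comm] using h
  have hP : HasDerivAt (fun y => c0 + c1 * Real.tanh (B * y) + c2 * Real.tanh (B * y) ^ 2)
      (c1 * (B * (1 - Real.tanh (B * x) ^ 2))
        + c2 * (2 * Real.tanh (B * x) * (B * (1 - Real.tanh (B * x) ^ 2)))) x := by
    have h2 : HasDerivAt (fun y => Real.tanh (B * y) ^ 2)
        (2 * Real.tanh (B * x) * (B * (1 - Real.tanh (B * x) ^ 2))) x := by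
      have := hT.fun_pow 2
      simpa [pow_one, mul_comm, mul_assoc, mul_left_comm] using this
    exact ((hT.const_mul c1).const_add c0).add (h2.const_mul c2)
  have h := hE.fun_mul hP
  refine h.congr_deriv ?_
  ring

/-- For `ν > 0` and `λ < 2ν`, with `μ = √(1 − λ/(2ν))`:
(i) each of `v⁺, v⁻` solves `v'' + 2ν sech²(√ν x) v = (ν − λ/2) v`;
(ii) the Wronskian at `x = 0` equals `2μ√ν(μ² − 1) = −(λ/√ν)√(1 − λ/(2ν))`;
(iii) this Evans function vanishes if and only if `λ = 0`. -/
theorem stmt19 (ν lam : ℝ) (hν : 0 < ν) (hlam : lam < 2 * ν) :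
    (∀ ε : ℝ, ε = 1 ∨ ε = -1 → ∀ x : ℝ,
      deriv (deriv (vLW ν lam ε)) x
          + 2 * ν * (1 / Real.cosh (Real.sqrt ν * x)) ^ 2 * vLW ν lam ε x
        = (ν - lam / 2) * vLW ν lam ε x) ∧
    (vLW ν lam 1 0 * deriv (vLW ν lam (-1)) 0
        - deriv (vLW ν lam 1) 0 * vLW ν lam (-1) 0
      = 2 * Real.sqrt (1 - lam / (2 * ν)) * Real.sqrt ν *
          ((Real.sqrt (1 - lam / (2 * ν))) ^ 2 - 1)) ∧
    (2 * Real.sqrt (1 - lam / (2 * ν)) * Real.sqrt ν *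
        ((Real.sqrt (1 - lam / (2 * ν))) ^ 2 - 1)
      = -(lam / Real.sqrt ν) * Real.sqrt (1 - lam / (2 * ν))) ∧
    (-(lam / Real.sqrt ν) * Real.sqrt (1 - lam / (2 * ν)) = 0 ↔ lam = 0) := by
  set μ := Real.sqrt (1 - lam / (2 * ν)) with hμdef
  set s := Real.sqrt ν with hsdef
  have hs2 : s ^ 2 = ν := Real.sq_sqrt hν.le
  have hspos : 0 < s := Real.sqrt_pos.mpr hν
  have harg : 0 < 1 - lam / (2 * ν) := by
    have : lam / (2 * ν) < 1 := (div_lt_one (by linarith)).mpr hlam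
    linarith
  have hμ2 : μ ^ 2 = 1 - lam / (2 * ν) := Real.sq_sqrt harg.le
  have hμpos : 0 < μ := Real.sqrt_pos.mpr harg
  have hlam_eq : lam = 2 * s ^ 2 - 2 * s ^ 2 * μ ^ 2 := by
    rw [hμ2, hs2]; field_simp; ring
  -- rewrite vLW in the canonical polynomial-in-tanh form
  have hv : ∀ ε : ℝ, vLW ν lam ε = fun y => Real.exp ((ε * μ * s) * y) *
      ((-ε * μ) + 1 * Real.tanh (s * y) + 0 * Real.tanh (s * y) ^ 2) := by
    intro ε; funext y; simp [vLW, ← hμdef, ← hsdef]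
  -- first derivative
  have h1 : ∀ ε x : ℝ, HasDerivAt (vLW ν lam ε)
      (Real.exp ((ε * μ * s) * x) *
        ((ε * μ * s * (-ε * μ) + s) + (ε * μ * s) * Real.tanh (s * x)
          + (-s) * Real.tanh (s * x) ^ 2)) x := by
    intro ε x
    rw [hv ε]
    have h := vderiv (ε * μ * s) s (-ε * μ) 1 0 x
    have e : Real.exp ((ε * μ * s) * x) *
        ((ε * μ * s) * ((-ε * μ) + 1 * Real.tanh (s * x) + 0 * Real.tanh (s * x) ^ 2)
          + (1 + 2 * 0 * Real.tanh (s * x)) * (s * (1 - Real.tanh (s * x) ^ 2)))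
        = Real.exp ((ε * μ * s) * x) *
        ((ε * μ * s * (-ε * μ) + s) + (ε * μ * s) * Real.tanh (s * x)
          + (-s) * Real.tanh (s * x) ^ 2) := by ring
    exact e ▸ h
  have hd1 : ∀ ε x : ℝ, deriv (vLW ν lam ε) x
      = Real.exp ((ε * μ * s) * x) *
        ((ε * μ * s * (-ε * μ) + s) + (ε * μ * s) * Real.tanh (s * x)
          + (-s) * Real.tanh (s * x) ^ 2) := fun ε x => (h1 ε x).deriv
  refine ⟨?_, ?_, ?_, ?_⟩
  · -- the ODE
    intro ε hε x
    have hdd : deriv (deriv (vLW ν lam ε)) x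
        = Real.exp ((ε * μ * s) * x) *
          ((ε * μ * s) * ((ε * μ * s * (-ε * μ) + s) + (ε * μ * s) * Real.tanh (s * x)
              + (-s) * Real.tanh (s * x) ^ 2)
            + ((ε * μ * s) + 2 * (-s) * Real.tanh (s * x))
              * (s * (1 - Real.tanh (s * x) ^ 2))) := by
      have hfun : deriv (vLW ν lam ε) = fun y => Real.exp ((ε * μ * s) * y) *
          ((ε * μ * s * (-ε * μ) + s) + (ε * μ * s) * Real.tanh (s * y)
            + (-s) * Real.tanh (s * y) ^ 2) := funext (hd1 ε)
      rw [hfun]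
      exact (vderiv (ε * μ * s) s (ε * μ * s * (-ε * μ) + s) (ε * μ * s) (-s) x).deriv
    have hsech : (1 / Real.cosh (s * x)) ^ 2 = 1 - Real.tanh (s * x) ^ 2 := by
      have hc : Real.cosh (s * x) ≠ 0 := ne_of_gt (Real.cosh_pos _)
      have h1' := Real.cosh_sq_sub_sinh_sq (s * x)
      rw [Real.tanh_eq_sinh_div_cosh]
      field_simp
      try nlinarith [h1']
    rw [hdd, hsech, hv ε]
    rcases hε with h | h <;> subst h <;>
      · simp only []
        rw [hlam_eq, ← hs2]
        ring
  · -- Wronskian at 0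
    rw [hd1 1 0, hd1 (-1) 0]
    simp [vLW, ← hμdef, ← hsdef, Real.tanh_zero]
    ring
  · -- value of the Wronskian
    have hs0 : s ≠ 0 := ne_of_gt hspos
    rw [hlam_eq]
    field_simp
    ring
  · constructor
    · intro h
      rcases mul_eq_zero.mp h with h | h
      · have : lam / s = 0 := by linarith [neg_eq_zero.mp h]
        rcases div_eq_zero_iff.mp this with h' | h'
        · exact h'
        · exact absurd h' (ne_of_gt hspos)
      · exact absurd h (ne_of_gt hμpos)
    · intro h; rw [h]; simp
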